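/- arXiv:1609.06561 — 2 statements merged into one kernel-verified Lean document; each statement's English description precedes it below -/
import Mathlib

section
/- Let the parameters of the bivariate generalized Cauchy model satisfy ρ² ≤ (β11·β22/β12²)·(s11^{α11}·s22^{α22}/s12^{2α12}) · inf_{r>0} [ r^{α11+α22−2α12} · p^{(1)}_{α11,β11,s11}(r)·p^{(1)}_{α22,β22,s22}(r) / (p^{(1)}_{α12,β12,s12}(r))² ], where the infimum is taken over all r > 0 with p^{(1)}_{α12,β12,s12}(r) ≠ 0. Then the bivariate generalized Cauchy model C is positive definite in ℝ. -/
open Matrix Set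

noncomputable section

/-- A `2×2`-matrix-valued function `C` on `[0,∞)` is positive definite in `ℝⁿ` if for all
finitely many points `x₁,…,x_p ∈ ℝⁿ` and vectors `a₁,…,a_p ∈ ℝ²`,
`∑_{i,j} aᵢᵀ C(‖xᵢ - xⱼ‖) aⱼ ≥ 0`. -/
def PosDefIn (n : ℕ) (C : ℝ → Matrix (Fin 2) (Fin 2) ℝ) : Prop :=
  ∀ (p : ℕ) (x : Fin p → EuclideanSpace ℝ (Fin n)) (a : Fin p → Fin 2 → ℝ),
    0 ≤ ∑ i : Fin p, ∑ j : Fin p, a i ⬝ᵥ (C ‖x i - x j‖).mulVec (a j)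

/-- The auxiliary function
`p⁽¹⁾_{α,β,s}(r) = ((β+1)(sr)^α - α + 1) / (1+(sr)^α)^{β/α+2}`. -/
def p1 (α β s r : ℝ) : ℝ :=
  ((β + 1) * (s * r) ^ α - α + 1) / (1 + (s * r) ^ α) ^ (β / α + 2)

/-!
Write `φ(r) = (1 + (s r)^α)^(-β/α)`. Integrating by parts twice (both `φ` and `t φ'(t)` vanish
at infinity) gives the triangular-mixture representation `φ(r) = ∫₀^∞ (t - r)₊ φ''(t) dt` for
`r ≥ 0`, so `C(r) = ∫₀^∞ (t - r)₊ M(t) dt`, where `M(t)` is the matrix built from the second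
derivatives. The kernel `(t - |x - y|)₊` is positive semidefinite on `ℝ`: it is the `L²` inner
product of the indicators of `[x, x + t)` and `[y, y + t)`. The diagonal entries of `M(t)` are
nonnegative because `α₁₁, α₂₂ ≤ 1`, and the hypothesis on `ρ` is precisely what makes
`det M(t) ≥ 0` for every `t > 0`. The quadratic form of `C` is thus an integral of quadratic
forms of Kronecker products of positive semidefinite matrices.
-/

open Real MeasureTheory Filter Topology

def IsTentMixture (f g : ℝ → ℝ) : Prop :=
  ∀ r ≥ 0, IntegrableOn (fun t => max (t - r) 0 * g t) (Ioi 0) ∧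
    f r = ∫ t in Ioi 0, max (t - r) 0 * g t

theorem IsTentMixture.const_mul {f g : ℝ → ℝ} (h : IsTentMixture f g) (c : ℝ) :
    IsTentMixture (fun r => c * f r) (fun t => c * g t) := by
  intro r hr
  obtain ⟨hint, heq⟩ := h r hr
  simp only [mul_left_comm _ c, integral_const_mul, heq]
  exact ⟨hint.const_mul c, trivial⟩

theorem posSemidef_tentKernel {ι : Type*} [Finite ι] (y : ι → ℝ) (t : ℝ) :
    (of fun i j => max (t - |y i - y j|) 0).PosSemidef := by
  let v : ι → Lp ℝ 2 (volume : Measure ℝ) := fun i =>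
    indicatorConstLp 2 measurableSet_Ico measure_Ico_lt_top.ne (1 : ℝ)
      (s := Ico (y i) (y i + t))
  have hv : (of fun i j => max (t - |y i - y j|) 0) = gram ℝ v := by
    ext i j
    rw [gram_apply, L2.inner_indicatorConstLp_one_indicatorConstLp_one _ _
      measure_Ico_lt_top.ne measure_Ico_lt_top.ne, Ico_inter_Ico, Real.volume_real_Ico,
      min_add_add_right, of_apply, ← max_sub_min_eq_abs, max_comm (y j), min_comm (y j),
      RCLike.ofReal_real_eq_id, id]
    ring_nf
  exact hv ▸ posSemidef_gram ℝ v

theorem sum_mul_dotProduct_mulVec_nonneg {ι κ : Type*} [Fintype ι] [Fintype κ]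
    {K : Matrix ι ι ℝ} {M : Matrix κ κ ℝ} (hK : K.PosSemidef) (hM : M.PosSemidef)
    (a : ι → κ → ℝ) : 0 ≤ ∑ i, ∑ j, K i j * (a i ⬝ᵥ M *ᵥ a j) := by
  have := (hK.kronecker hM).dotProduct_mulVec_nonneg (fun p => a p.1 p.2)
  simp only [star_trivial, dotProduct, mulVec, Fintype.sum_prod_type, kroneckerMap_apply,
    Finset.mul_sum] at this ⊢
  refine this.trans_eq (Finset.sum_congr rfl fun i _ => ?_)
  rw [Finset.sum_comm]
  exact Finset.sum_congr rfl fun j _ => Finset.sum_congr rfl fun k _ =>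
    Finset.sum_congr rfl fun l _ => by ring

theorem posSemidef_fin_two_of_sq_le {a b d : ℝ} (ha : 0 ≤ a) (hd : 0 ≤ d)
    (hb : b ^ 2 ≤ a * d) : !![a, b; b, d].PosSemidef := by
  refine .of_dotProduct_mulVec_nonneg ?_ fun x => ?_
  · ext i j; fin_cases i <;> fin_cases j <;> rfl
  · simp only [dotProduct, Pi.star_apply, star_trivial, mulVec, of_apply, cons_val',
      cons_val_fin_one, Fin.sum_univ_two, Fin.isValue, cons_val_zero, cons_val_one]
    rcases ha.eq_or_lt with rfl | ha
    · obtain rfl : b = 0 := by nlinarith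
      nlinarith [sq_nonneg (x 1)]
    · nlinarith [sq_nonneg (a * x 0 + b * x 1), sq_nonneg (x 1)]

theorem integrable_dotProduct_mulVec {α κ : Type*} [MeasurableSpace α] [Fintype κ]
    {μ : Measure α} {M : α → Matrix κ κ ℝ} (hM : ∀ k l, Integrable (fun t => M t k l) μ)
    (u v : κ → ℝ) : Integrable (fun t => u ⬝ᵥ M t *ᵥ v) μ := by
  simp_rw [dot_mulVec_eq_sum_sum]
  exact integrable_finsetSum _ fun l _ => integrable_finsetSum _ fun k _ =>
    ((hM k l).const_mul (u k)).mul_const (v l)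

theorem integral_dotProduct_mulVec {α κ : Type*} [MeasurableSpace α] [Fintype κ]
    {μ : Measure α} {M : α → Matrix κ κ ℝ} (hM : ∀ k l, Integrable (fun t => M t k l) μ)
    (u v : κ → ℝ) :
    ∫ t, u ⬝ᵥ M t *ᵥ v ∂μ = u ⬝ᵥ (of fun k l => ∫ t, M t k l ∂μ) *ᵥ v := by
  simp_rw [dot_mulVec_eq_sum_sum, of_apply]
  rw [integral_finsetSum _ fun l _ => integrable_finsetSum _ fun k _ =>
    ((hM k l).const_mul (u k)).mul_const (v l)]
  refine Finset.sum_congr rfl fun l _ => ?_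
  rw [integral_finsetSum _ fun k _ => ((hM k l).const_mul (u k)).mul_const (v l)]
  simp_rw [integral_mul_const, integral_const_mul]

theorem EuclideanSpace.norm_fin_one (x : EuclideanSpace ℝ (Fin 1)) : ‖x‖ = |x 0| := by
  rw [EuclideanSpace.norm_eq, Fin.sum_univ_one, Real.norm_eq_abs, sqrt_sq_eq_abs, abs_abs]

theorem posDefIn_one_of_isTentMixture {C M : ℝ → Matrix (Fin 2) (Fin 2) ℝ}
    (hM : ∀ t > 0, (M t).PosSemidef)
    (hCM : ∀ k l, IsTentMixture (fun r => C r k l) (fun t => M t k l)) :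
    PosDefIn 1 C := by
  intro p x a
  have hnorm (i j : Fin p) : ‖x i - x j‖ = |x i 0 - x j 0| := by
    rw [EuclideanSpace.norm_fin_one, PiLp.sub_apply]
  have hint (i j : Fin p) (k l : Fin 2) :
      Integrable (fun t => (max (t - ‖x i - x j‖) 0 • M t) k l) (volume.restrict (Ioi 0)) :=
    (hCM k l _ (norm_nonneg _)).1
  have hC (i j : Fin p) :
      C ‖x i - x j‖ = of fun k l => ∫ t in Ioi 0, (max (t - ‖x i - x j‖) 0 • M t) k l := by
    ext k l; exact (hCM k l _ (norm_nonneg _)).2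
  calc (0 : ℝ)
      ≤ ∫ t in Ioi 0, ∑ i, ∑ j, a i ⬝ᵥ (max (t - ‖x i - x j‖) 0 • M t) *ᵥ a j := by
        refine setIntegral_nonneg measurableSet_Ioi fun t ht => ?_
        simpa only [Matrix.smul_mulVec, dotProduct_smul, smul_eq_mul, hnorm, of_apply] using
          sum_mul_dotProduct_mulVec_nonneg (posSemidef_tentKernel (fun i => x i 0) t) (hM t ht) a
    _ = ∑ i, ∑ j, a i ⬝ᵥ C ‖x i - x j‖ *ᵥ a j := by
        rw [integral_finsetSum _ fun i _ => integrable_finsetSum _ fun j _ =>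
          integrable_dotProduct_mulVec (hint i j) _ _]
        refine Finset.sum_congr rfl fun i _ => ?_
        rw [integral_finsetSum _ fun j _ => integrable_dotProduct_mulVec (hint i j) _ _]
        exact Finset.sum_congr rfl fun j _ => by rw [integral_dotProduct_mulVec (hint i j), hC]

def genCauchy (α β s t : ℝ) : ℝ := (1 + (s * t) ^ α) ^ (-(β / α))

def genCauchyDeriv (α β s t : ℝ) : ℝ :=
  -β * (s * t) ^ α / (t * (1 + (s * t) ^ α)) * genCauchy α β s t

def genCauchyDeriv2 (α β s t : ℝ) : ℝ := β * ((s * t) ^ α / t ^ 2) * p1 α β s t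

section GenCauchy

variable {α β s t : ℝ}

theorem p1_eq_mul_genCauchy (hs : 0 ≤ s) (ht : 0 ≤ t) :
    p1 α β s t = ((β + 1) * (s * t) ^ α - α + 1) / (1 + (s * t) ^ α) ^ 2 * genCauchy α β s t := by
  have hu : 0 < 1 + (s * t) ^ α := by positivity
  rw [p1, genCauchy, rpow_add hu, rpow_neg hu.le, rpow_two]
  field_simp

theorem p1_nonneg (hα : α ≤ 1) (hβ : 0 ≤ β) (hs : 0 ≤ s) (ht : 0 ≤ t) : 0 ≤ p1 α β s t := by
  have hx : 0 ≤ (s * t) ^ α := by positivity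
  exact div_nonneg (by nlinarith) (by positivity)

theorem genCauchyDeriv2_nonneg (hα : α ≤ 1) (hβ : 0 ≤ β) (hs : 0 ≤ s) (ht : 0 ≤ t) :
    0 ≤ genCauchyDeriv2 α β s t := by
  have := p1_nonneg hα hβ hs ht
  unfold genCauchyDeriv2; positivity

theorem hasDerivAt_mul_rpow (hs : 0 < s) (ht : 0 < t) :
    HasDerivAt (fun t => (s * t) ^ α) (α * (s * t) ^ α / t) t := by
  refine (((hasDerivAt_id t).const_mul s).rpow_const (p := α)
    (Or.inl (by positivity))).congr_deriv ?_
  rw [rpow_sub_one (by positivity)]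
  field_simp
  exact mul_div_cancel_right₀ _ ht.ne'

theorem hasDerivAt_genCauchy (hα : α ≠ 0) (hs : 0 < s) (ht : 0 < t) :
    HasDerivAt (genCauchy α β s) (genCauchyDeriv α β s t) t := by
  have hu : 0 < 1 + (s * t) ^ α := by positivity
  refine (((hasDerivAt_mul_rpow hs ht).const_add 1).rpow_const (p := -(β / α))
    (Or.inl hu.ne')).congr_deriv ?_
  rw [genCauchyDeriv, genCauchy, rpow_sub_one hu.ne']
  field_simp

theorem hasDerivAt_genCauchyDeriv (hα : α ≠ 0) (hs : 0 < s) (ht : 0 < t) :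
    HasDerivAt (genCauchyDeriv α β s) (genCauchyDeriv2 α β s t) t := by
  have hu : 0 < 1 + (s * t) ^ α := by positivity
  have hx := hasDerivAt_mul_rpow (α := α) hs ht
  refine ((((hx.const_mul (-β)).div ((hasDerivAt_id' t).mul (hx.const_add 1))
    (by simp only [Pi.mul_apply]; positivity)).mul (hasDerivAt_genCauchy hα hs ht))).congr_deriv ?_
  rw [genCauchyDeriv2, p1_eq_mul_genCauchy hs.le ht.le, genCauchyDeriv]
  simp only [Pi.mul_apply, Pi.div_apply]
  field_simp
  ring

theorem genCauchy_nonneg (hs : 0 ≤ s) (ht : 0 ≤ t) : 0 ≤ genCauchy α β s t := by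
  unfold genCauchy; positivity

theorem genCauchy_le_one (hα : 0 < α) (hβ : 0 ≤ β) (hs : 0 ≤ s) (ht : 0 ≤ t) :
    genCauchy α β s t ≤ 1 :=
  rpow_le_one_of_one_le_of_nonpos (by simp only [le_add_iff_nonneg_right]; positivity)
    (neg_nonpos.2 (by positivity))

theorem continuousAt_genCauchy (hα : 0 < α) (hs : 0 ≤ s) (ht : 0 ≤ t) :
    ContinuousAt (genCauchy α β s) t :=
  (continuousAt_const.add ((continuousAt_const.mul continuousAt_id).rpow_const
    (Or.inr hα.le))).rpow_const (Or.inl (by positivity : (0 : ℝ) < 1 + (s * t) ^ α).ne')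

theorem tendsto_genCauchy_atTop (hα : 0 < α) (hβ : 0 < β) (hs : 0 < s) :
    Tendsto (genCauchy α β s) atTop (𝓝 0) :=
  (tendsto_rpow_neg_atTop (by positivity)).comp <| tendsto_atTop_add_const_left _ 1 <|
    (tendsto_rpow_atTop hα).comp (tendsto_id.const_mul_atTop hs)

theorem genCauchyDeriv_nonpos (hβ : 0 ≤ β) (hs : 0 ≤ s) (ht : 0 ≤ t) :
    genCauchyDeriv α β s t ≤ 0 := by
  have := genCauchy_nonneg (α := α) (β := β) hs ht
  rw [genCauchyDeriv, neg_mul, neg_div, neg_mul]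
  exact neg_nonpos.2 (by positivity)

theorem integrableOn_genCauchyDeriv (hα : 0 < α) (hβ : 0 < β) (hs : 0 < s) :
    IntegrableOn (genCauchyDeriv α β s) (Ioi 0) :=
  integrableOn_Ioi_deriv_of_nonpos (continuousAt_genCauchy hα hs.le le_rfl).continuousWithinAt
    (fun _ ht => hasDerivAt_genCauchy hα.ne' hs ht)
    (fun _ ht => genCauchyDeriv_nonpos hβ.le hs.le (le_of_lt ht)) (tendsto_genCauchy_atTop hα hβ hs)

theorem mul_genCauchyDeriv (ht : t ≠ 0) :
    t * genCauchyDeriv α β s t =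
      -β * ((s * t) ^ α / (1 + (s * t) ^ α)) * genCauchy α β s t := by
  rw [genCauchyDeriv]
  field_simp

theorem abs_mul_genCauchyDeriv2_le (hα : 0 ≤ α) (hβ : 0 ≤ β) (hs : 0 ≤ s) (ht : 0 < t) :
    |t * genCauchyDeriv2 α β s t| ≤ (α + β + 2) * |genCauchyDeriv α β s t| := by
  have hx : 0 ≤ (s * t) ^ α := by positivity
  have hu : 0 < 1 + (s * t) ^ α := by positivity
  have hφ := genCauchy_nonneg (α := α) (β := β) hs ht.le
  have hP : 0 ≤ β * (s * t) ^ α / (t * (1 + (s * t) ^ α)) * genCauchy α β s t := by positivity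
  have h2 : t * genCauchyDeriv2 α β s t = β * (s * t) ^ α / (t * (1 + (s * t) ^ α)) *
      genCauchy α β s t * (((β + 1) * (s * t) ^ α - α + 1) / (1 + (s * t) ^ α)) := by
    rw [genCauchyDeriv2, p1_eq_mul_genCauchy hs ht.le]
    field_simp
  have h1 : genCauchyDeriv α β s t =
      -(β * (s * t) ^ α / (t * (1 + (s * t) ^ α)) * genCauchy α β s t) := by
    rw [genCauchyDeriv]; ring
  have hnum : |((β + 1) * (s * t) ^ α - α + 1) / (1 + (s * t) ^ α)| ≤ α + β + 2 := by
    rw [abs_div, abs_of_pos hu, div_le_iff₀ hu, abs_le]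
    constructor <;> nlinarith
  rw [h2, h1, abs_neg, abs_mul, abs_of_nonneg hP, mul_comm (α + β + 2)]
  exact mul_le_mul_of_nonneg_left hnum hP

theorem integrableOn_tent_mul_genCauchyDeriv2 (hα : 0 < α) (hβ : 0 < β) (hs : 0 < s)
    {r : ℝ} (hr : 0 ≤ r) :
    IntegrableOn (fun t => max (t - r) 0 * genCauchyDeriv2 α β s t) (Ioi 0) := by
  refine Integrable.mono' ((integrableOn_genCauchyDeriv hα hβ hs).norm.const_mul (α + β + 2))
    ?_ ((ae_restrict_iff' measurableSet_Ioi).2 (Eventually.of_forall fun t ht => ?_))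
  · unfold genCauchyDeriv2 p1
    exact Measurable.aestronglyMeasurable (by fun_prop)
  · have ht : 0 < t := ht
    calc ‖max (t - r) 0 * genCauchyDeriv2 α β s t‖
        ≤ |t * genCauchyDeriv2 α β s t| := by
          rw [norm_mul, Real.norm_eq_abs, Real.norm_eq_abs, abs_mul, abs_of_pos ht,
            abs_of_nonneg (le_max_right _ _)]
          gcongr
          exact max_le (by linarith) ht.le
      _ ≤ (α + β + 2) * ‖genCauchyDeriv α β s t‖ := abs_mul_genCauchyDeriv2_le hα.le hβ.le hs.le ht

theorem tendsto_sub_mul_genCauchyDeriv_atTop (hα : 0 < α) (hβ : 0 < β) (hs : 0 < s)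
    {r : ℝ} (hr : 0 ≤ r) :
    Tendsto (fun t => (t - r) * genCauchyDeriv α β s t) atTop (𝓝 0) := by
  refine squeeze_zero_norm' ?_ (by simpa using (tendsto_genCauchy_atTop hα hβ hs).const_mul β)
  filter_upwards [eventually_gt_atTop r] with t hrt
  have ht : 0 < t := hr.trans_lt hrt
  have hu : 0 < 1 + (s * t) ^ α := by positivity
  have hφ := genCauchy_nonneg (α := α) (β := β) hs.le ht.le
  have hq : (s * t) ^ α / (1 + (s * t) ^ α) ≤ 1 := by rw [div_le_one hu]; linarith
  calc ‖(t - r) * genCauchyDeriv α β s t‖ ≤ |t * genCauchyDeriv α β s t| := by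
        rw [Real.norm_eq_abs, abs_mul, abs_mul, abs_of_pos ht, abs_of_pos (by linarith)]
        gcongr
        linarith
    _ = β * ((s * t) ^ α / (1 + (s * t) ^ α)) * genCauchy α β s t := by
        rw [mul_genCauchyDeriv ht.ne', neg_mul, neg_mul, abs_neg, abs_of_nonneg (by positivity)]
    _ ≤ β * genCauchy α β s t := by
        rw [mul_assoc]; gcongr; exact mul_le_of_le_one_left hφ hq

theorem tendsto_sub_mul_genCauchyDeriv_nhdsGT (hα : 0 < α) (hβ : 0 ≤ β) (hs : 0 < s)
    {r : ℝ} (hr : 0 ≤ r) :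
    Tendsto (fun t => (t - r) * genCauchyDeriv α β s t) (𝓝[>] r) (𝓝 0) := by
  rcases hr.eq_or_lt with rfl | hr
  · have hc : ContinuousAt (fun t : ℝ => β * (s * t) ^ α) 0 := continuousAt_const.mul
      ((continuousAt_const.mul (continuousAt_id' 0)).rpow_const (Or.inr hα.le))
    have hx : Tendsto (fun t => β * (s * t) ^ α) (𝓝[>] 0) (𝓝 0) := by
      simpa [zero_rpow hα.ne'] using hc.tendsto.mono_left nhdsWithin_le_nhds
    refine squeeze_zero_norm' ?_ hx
    filter_upwards [self_mem_nhdsWithin] with t (ht : 0 < t)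
    have hu : 0 < 1 + (s * t) ^ α := by positivity
    have hφ := genCauchy_le_one (β := β) hα hβ hs.le ht.le
    rw [sub_zero, Real.norm_eq_abs, mul_genCauchyDeriv ht.ne', neg_mul, neg_mul, abs_neg,
      abs_of_nonneg (by positivity [genCauchy_nonneg (α := α) (β := β) hs.le ht.le]), mul_assoc]
    gcongr
    calc (s * t) ^ α / (1 + (s * t) ^ α) * genCauchy α β s t ≤ (s * t) ^ α / (1 + (s * t) ^ α) :=
          mul_le_of_le_one_right (by positivity) hφ
      _ ≤ (s * t) ^ α :=
          div_le_self (by positivity) (by simp only [le_add_iff_nonneg_right]; positivity)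
  · have hc := (hasDerivAt_genCauchyDeriv (β := β) hα.ne' hs hr).continuousAt
    have h : ContinuousAt (fun t => (t - r) * genCauchyDeriv α β s t) r :=
      ((continuousAt_id' r).sub continuousAt_const).mul hc
    simpa using h.tendsto.mono_left nhdsWithin_le_nhds

theorem integral_tent_mul_genCauchyDeriv2 (hα : 0 < α) (hβ : 0 < β) (hs : 0 < s)
    {r : ℝ} (hr : 0 ≤ r) :
    ∫ t in Ioi 0, max (t - r) 0 * genCauchyDeriv2 α β s t = genCauchy α β s r := by
  let F t := genCauchy α β s t - (t - r) * genCauchyDeriv α β s t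
  have hF : ∀ t ∈ Ioi r, HasDerivAt F (-((t - r) * genCauchyDeriv2 α β s t)) t := by
    intro t (hrt : r < t)
    have ht := hr.trans_lt hrt
    refine ((hasDerivAt_genCauchy hα.ne' hs ht).sub (((hasDerivAt_id' t).sub_const r).mul
      (hasDerivAt_genCauchyDeriv hα.ne' hs ht))).congr_deriv ?_
    ring
  have hFr : ContinuousWithinAt F (Ici r) r := by
    rw [← continuousWithinAt_Ioi_iff_Ici, ContinuousWithinAt]
    simpa [F] using ((continuousAt_genCauchy hα hs.le hr).tendsto.mono_left
      nhdsWithin_le_nhds).sub (tendsto_sub_mul_genCauchyDeriv_nhdsGT hα hβ.le hs hr)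
  have hpos : EqOn (fun t => max (t - r) 0 * genCauchyDeriv2 α β s t)
      (fun t => (t - r) * genCauchyDeriv2 α β s t) (Ioi r) := fun t (hrt : r < t) => by
    simp only [max_eq_left (sub_nonneg.2 hrt.le)]
  have hint : IntegrableOn (fun t => (t - r) * genCauchyDeriv2 α β s t) (Ioi r) :=
    ((integrableOn_tent_mul_genCauchyDeriv2 hα hβ hs hr).mono_set (Ioi_subset_Ioi hr)).congr_fun
      hpos measurableSet_Ioi
  have hFTC := integral_Ioi_of_hasDerivAt_of_tendsto hFr hF hint.neg
    ((tendsto_genCauchy_atTop hα hβ hs).sub (tendsto_sub_mul_genCauchyDeriv_atTop hα hβ hs hr))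
  rw [setIntegral_eq_of_subset_of_forall_sdiff_eq_zero measurableSet_Ioi (Ioi_subset_Ioi hr)
    fun t ⟨_, (ht : ¬r < t)⟩ => by simp [max_eq_right (sub_nonpos.2 (not_lt.1 ht))],
    setIntegral_congr_fun measurableSet_Ioi hpos]
  rw [integral_neg] at hFTC
  simpa only [sub_self, zero_mul, sub_zero, zero_sub, neg_inj, F] using hFTC

theorem isTentMixture_genCauchy (hα : 0 < α) (hβ : 0 < β) (hs : 0 < s) :
    IsTentMixture (genCauchy α β s) (genCauchyDeriv2 α β s) := fun _ hr =>
  ⟨integrableOn_tent_mul_genCauchyDeriv2 hα hβ hs hr,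
    (integral_tent_mul_genCauchyDeriv2 hα hβ hs hr).symm⟩

end GenCauchy

theorem sq_mul_genCauchyDeriv2_le_of_sq_le {ρ α11 α12 α22 β11 β12 β22 s11 s12 s22 t : ℝ}
    (hs11 : 0 ≤ s11) (hs12 : 0 < s12) (hs22 : 0 ≤ s22) (hβ12 : β12 ≠ 0) (ht : 0 < t)
    (hp : p1 α12 β12 s12 t ≠ 0)
    (hρ : ρ ^ 2 ≤ β11 * β22 / β12 ^ 2 * (s11 ^ α11 * s22 ^ α22 / s12 ^ (2 * α12)) *
      (t ^ (α11 + α22 - 2 * α12) * (p1 α11 β11 s11 t * p1 α22 β22 s22 t) /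
        p1 α12 β12 s12 t ^ 2)) :
    (ρ * genCauchyDeriv2 α12 β12 s12 t) ^ 2 ≤
      genCauchyDeriv2 α11 β11 s11 t * genCauchyDeriv2 α22 β22 s22 t := by
  have hscale : s11 ^ α11 * s22 ^ α22 / s12 ^ (2 * α12) * t ^ (α11 + α22 - 2 * α12) =
      (s11 * t) ^ α11 * (s22 * t) ^ α22 / ((s12 * t) ^ α12) ^ 2 := by
    rw [mul_rpow hs11 ht.le, mul_rpow hs22 ht.le, mul_rpow hs12.le ht.le, rpow_sub ht,
      rpow_add ht, mul_comm 2 α12, rpow_mul hs12.le, rpow_mul ht.le, rpow_two, rpow_two]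
    field_simp
  have hratio : β11 * β22 / β12 ^ 2 * (s11 ^ α11 * s22 ^ α22 / s12 ^ (2 * α12)) *
      (t ^ (α11 + α22 - 2 * α12) * (p1 α11 β11 s11 t * p1 α22 β22 s22 t) /
        p1 α12 β12 s12 t ^ 2) =
      genCauchyDeriv2 α11 β11 s11 t * genCauchyDeriv2 α22 β22 s22 t /
        genCauchyDeriv2 α12 β12 s12 t ^ 2 := by
    have : 0 < (s12 * t) ^ α12 := by positivity
    calc _ = β11 * β22 / β12 ^ 2 *
          (s11 ^ α11 * s22 ^ α22 / s12 ^ (2 * α12) * t ^ (α11 + α22 - 2 * α12)) *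
          (p1 α11 β11 s11 t * p1 α22 β22 s22 t / p1 α12 β12 s12 t ^ 2) := by ring
      _ = _ := by
        rw [hscale]
        simp only [genCauchyDeriv2]
        field_simp
  have hpos : 0 < genCauchyDeriv2 α12 β12 s12 t ^ 2 := by
    unfold genCauchyDeriv2; positivity
  rw [hratio, le_div_iff₀ hpos] at hρ
  linarith [mul_pow ρ (genCauchyDeriv2 α12 β12 s12 t) 2]

theorem sq_mul_genCauchyDeriv2_le {ρ α11 α12 α22 β11 β12 β22 s11 s12 s22 : ℝ}
    (hs11 : 0 ≤ s11) (hs12 : 0 < s12) (hs22 : 0 ≤ s22)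
    (hα11 : α11 ≤ 1) (hα22 : α22 ≤ 1) (hβ11 : 0 ≤ β11) (hβ12 : β12 ≠ 0) (hβ22 : 0 ≤ β22)
    (hρ : ρ ^ 2 ≤ β11 * β22 / β12 ^ 2 * (s11 ^ α11 * s22 ^ α22 / s12 ^ (2 * α12)) *
      sInf ((fun r : ℝ =>
          r ^ (α11 + α22 - 2 * α12) *
            (p1 α11 β11 s11 r * p1 α22 β22 s22 r) / (p1 α12 β12 s12 r) ^ 2) ''
        {r : ℝ | 0 < r ∧ p1 α12 β12 s12 r ≠ 0}))
    {t : ℝ} (ht : 0 < t) :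
    (ρ * genCauchyDeriv2 α12 β12 s12 t) ^ 2 ≤
      genCauchyDeriv2 α11 β11 s11 t * genCauchyDeriv2 α22 β22 s22 t := by
  have h11 := genCauchyDeriv2_nonneg hα11 hβ11 hs11 ht.le
  have h22 := genCauchyDeriv2_nonneg hα22 hβ22 hs22 ht.le
  by_cases hp : p1 α12 β12 s12 t = 0
  · simpa [genCauchyDeriv2, hp] using mul_nonneg h11 h22
  refine sq_mul_genCauchyDeriv2_le_of_sq_le hs11 hs12 hs22 hβ12 ht hp
    (hρ.trans (mul_le_mul_of_nonneg_left (csInf_le ⟨0, ?_⟩ ⟨t, ⟨ht, hp⟩, rfl⟩) (by positivity)))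
  rintro _ ⟨r, ⟨hr, -⟩, rfl⟩
  have := p1_nonneg hα11 hβ11 hs11 hr.le
  have := p1_nonneg hα22 hβ22 hs22 hr.le
  positivity

theorem bivariate_generalized_cauchy_posDef_R1_general
    (σ1 σ2 s11 s12 s22 α11 α12 α22 β11 β12 β22 ρ : ℝ)
    (hs11 : 0 < s11) (hs12 : 0 < s12) (hs22 : 0 < s22)
    (hα11 : α11 ∈ Ioc (0 : ℝ) 1) (hα22 : α22 ∈ Ioc (0 : ℝ) 1)
    (hα12 : α12 ∈ Ioc (0 : ℝ) 2)
    (hβ11 : 0 < β11) (hβ12 : 0 < β12) (hβ22 : 0 < β22)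
    (hρ2 : ρ ^ 2 ≤ β11 * β22 / β12 ^ 2 * (s11 ^ α11 * s22 ^ α22 / s12 ^ (2 * α12)) *
      sInf ((fun r : ℝ =>
          r ^ (α11 + α22 - 2 * α12) *
            (p1 α11 β11 s11 r * p1 α22 β22 s22 r) / (p1 α12 β12 s12 r) ^ 2) ''
        {r : ℝ | 0 < r ∧ p1 α12 β12 s12 r ≠ 0})) :
    PosDefIn 1 (fun r =>
      !![σ1 ^ 2 * (1 + (s11 * r) ^ α11) ^ (-(β11 / α11)),
         ρ * σ1 * σ2 * (1 + (s12 * r) ^ α12) ^ (-(β12 / α12));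
         ρ * σ1 * σ2 * (1 + (s12 * r) ^ α12) ^ (-(β12 / α12)),
         σ2 ^ 2 * (1 + (s22 * r) ^ α22) ^ (-(β22 / α22))]) := by
  set φ11 := genCauchyDeriv2 α11 β11 s11
  set φ12 := genCauchyDeriv2 α12 β12 s12
  set φ22 := genCauchyDeriv2 α22 β22 s22
  refine posDefIn_one_of_isTentMixture (M := fun t =>
      !![σ1 ^ 2 * φ11 t, ρ * σ1 * σ2 * φ12 t; ρ * σ1 * σ2 * φ12 t, σ2 ^ 2 * φ22 t])
    (fun t ht => posSemidef_fin_two_of_sq_le ?_ ?_ ?_) fun k l => ?_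
  · exact mul_nonneg (sq_nonneg _) (genCauchyDeriv2_nonneg hα11.2 hβ11.le hs11.le ht.le)
  · exact mul_nonneg (sq_nonneg _) (genCauchyDeriv2_nonneg hα22.2 hβ22.le hs22.le ht.le)
  · have hdet := sq_mul_genCauchyDeriv2_le hs11.le hs12 hs22.le hα11.2 hα22.2 hβ11.le
      hβ12.ne' hβ22.le hρ2 ht
    calc (ρ * σ1 * σ2 * φ12 t) ^ 2 = (σ1 * σ2) ^ 2 * (ρ * φ12 t) ^ 2 := by ring
      _ ≤ (σ1 * σ2) ^ 2 * (φ11 t * φ22 t) := by gcongr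
      _ = σ1 ^ 2 * φ11 t * (σ2 ^ 2 * φ22 t) := by ring
  fin_cases k <;> fin_cases l
  exacts [(isTentMixture_genCauchy hα11.1 hβ11 hs11).const_mul _,
    (isTentMixture_genCauchy hα12.1 hβ12 hs12).const_mul _,
    (isTentMixture_genCauchy hα12.1 hβ12 hs12).const_mul _,
    (isTentMixture_genCauchy hα22.1 hβ22 hs22).const_mul _]

/-- Sufficient condition for positive definiteness of the bivariate generalized Cauchy
model in `ℝ`. -/
theorem bivariate_generalized_cauchy_posDef_R1
    (σ1 σ2 s11 s12 s22 α11 α12 α22 β11 β12 β22 ρ : ℝ)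
    (hσ1 : 0 < σ1) (hσ2 : 0 < σ2)
    (hs11 : 0 < s11) (hs12 : 0 < s12) (hs22 : 0 < s22)
    (hα11 : α11 ∈ Ioc (0 : ℝ) 1) (hα22 : α22 ∈ Ioc (0 : ℝ) 1)
    (hα12 : α12 ∈ Ioc (0 : ℝ) 2)
    (hβ11 : 0 < β11) (hβ12 : 0 < β12) (hβ22 : 0 < β22)
    (hρ : ρ ∈ Icc (-1 : ℝ) 1)
    (hρ2 : ρ ^ 2 ≤ β11 * β22 / β12 ^ 2 * (s11 ^ α11 * s22 ^ α22 / s12 ^ (2 * α12)) *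
      sInf ((fun r : ℝ =>
          r ^ (α11 + α22 - 2 * α12) *
            (p1 α11 β11 s11 r * p1 α22 β22 s22 r) / (p1 α12 β12 s12 r) ^ 2) ''
        {r : ℝ | 0 < r ∧ p1 α12 β12 s12 r ≠ 0})) :
    PosDefIn 1 (fun r =>
      !![σ1 ^ 2 * (1 + (s11 * r) ^ α11) ^ (-(β11 / α11)),
         ρ * σ1 * σ2 * (1 + (s12 * r) ^ α12) ^ (-(β12 / α12));
         ρ * σ1 * σ2 * (1 + (s12 * r) ^ α12) ^ (-(β12 / α12)),
         σ2 ^ 2 * (1 + (s22 * r) ^ α22) ^ (-(β22 / α22))]) :=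
  bivariate_generalized_cauchy_posDef_R1_general σ1 σ2 s11 s12 s22 α11 α12 α22 β11 β12 β22 ρ hs11
    hs12 hs22 hα11 hα22 hα12 hβ11 hβ12 hβ22 hρ2
end
end

section
/- Let n ≥ 1 be a natural number and consider the bivariate generalized Cauchy model C with parameters σ1, σ2 > 0, s11, s12, s22 > 0, α11, α22 ∈ (0,1], α12 ∈ (0,2], β11, β12, β22 > 0, ρ ∈ [−1,1]. Suppose there are indices i ≠ j in {1,2} with 2·β12 < β_{ii} + n, β_{ii} < n and β_{jj} > n. If C is positive definite in ℝⁿ, then ρ = 0. -/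
/-!
Test positive definiteness on the grid `{0,…,N-1}ⁿ` with constant coefficient vectors: the
matrix of grid sums `S_ij(N) = ∑_{v,w} C_ij(‖v - w‖)` is then positive semidefinite, so
`ρ² S₁₂² ≤ S₁₁ S₂₂` once the `σ`'s are cancelled. Since the entries of `C` are bounded below by
`r^(-β)` at large `r`, `S₁₂ ≳ N^(2n - β₁₂)`. Since they are bounded above by `(1 + r)^(-β)`,
which in turn is at most `∏ₖ (1 + |rₖ|)^(-β/n)` coordinatewise, the sums `S_ii` factor into
one-dimensional `p`-series: `S_ii ≲ N^(2n - β_ii)` when `β_ii < n` and `S_jj ≲ N^n` when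
`β_jj > n`. The hypothesis `2β₁₂ < β_ii + n` says exactly that `N^(3n - β_ii) = o(N^(4n - 2β₁₂))`,
which forces `ρ = 0`.
-/

open Matrix Set

noncomputable section

open Filter Asymptotics Finset

def cauchyKernel (s α β r : ℝ) : ℝ := (1 + (s * r) ^ α) ^ (-(β / α))

section CauchyKernel

variable {s α β : ℝ}

lemma cauchyKernel_nonneg (hs : 0 ≤ s) {r : ℝ} (hr : 0 ≤ r) : 0 ≤ cauchyKernel s α β r := by
  unfold cauchyKernel; positivity

lemma cauchyKernel_antitoneOn (hs : 0 ≤ s) (hα : 0 < α) (hβ : 0 ≤ β) :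
    AntitoneOn (cauchyKernel s α β) (Set.Ici 0) := by
  rintro r (hr : 0 ≤ r) r' - hrr'
  have : (s * r) ^ α ≤ (s * r') ^ α := by gcongr
  exact Real.rpow_le_rpow_of_nonpos (by positivity) (by linarith)
    (neg_nonpos.2 (by positivity))

lemma rpow_neg_mul_le_cauchyKernel (hs : 0 < s) (hα : 0 < α) (hβ : 0 ≤ β) {r : ℝ} (hr : 1 ≤ r) :
    (1 + s ^ α) ^ (-(β / α)) * r ^ (-β) ≤ cauchyKernel s α β r := by
  have hr0 : 0 < r := by linarith
  have hbase : 1 + (s * r) ^ α ≤ (1 + s ^ α) * r ^ α := by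
    rw [Real.mul_rpow hs.le hr0.le]
    nlinarith [Real.one_le_rpow hr hα.le, Real.rpow_pos_of_pos hs α]
  calc (1 + s ^ α) ^ (-(β / α)) * r ^ (-β) = ((1 + s ^ α) * r ^ α) ^ (-(β / α)) := by
        rw [Real.mul_rpow (by positivity) (by positivity), ← Real.rpow_mul hr0.le]
        field_simp
    _ ≤ cauchyKernel s α β r :=
        Real.rpow_le_rpow_of_nonpos (by positivity) hbase (neg_nonpos.2 (by positivity))

lemma cauchyKernel_le (hs : 0 < s) (hα : 0 < α) (hβ : 0 ≤ β) {r : ℝ} (hr : 0 ≤ r) :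
    cauchyKernel s α β r ≤ (min 1 s / 2) ^ (-β) * (1 + r) ^ (-β) := by
  have hone : 1 ≤ (1 + (s * r) ^ α) ^ α⁻¹ :=
    Real.one_le_rpow (by linarith [Real.rpow_nonneg (mul_nonneg hs.le hr) α]) (by positivity)
  have hsr : s * r ≤ (1 + (s * r) ^ α) ^ α⁻¹ :=
    calc s * r = ((s * r) ^ α) ^ α⁻¹ := (Real.rpow_rpow_inv (by positivity) hα.ne').symm
      _ ≤ _ := by gcongr; linarith
  have hmin : min 1 s * r ≤ s * r := by gcongr; exact min_le_right _ _
  -- `(1 + x^α)^(1/α) ≥ max 1 x ≥ (1 + x)/2`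
  have hx : min 1 s / 2 * (1 + r) ≤ (1 + (s * r) ^ α) ^ α⁻¹ := by
    linarith [min_le_left 1 s]
  calc cauchyKernel s α β r = ((1 + (s * r) ^ α) ^ α⁻¹) ^ (-β) := by
        rw [cauchyKernel, ← Real.rpow_mul (by positivity)]
        field_simp
    _ ≤ (min 1 s / 2 * (1 + r)) ^ (-β) :=
        Real.rpow_le_rpow_of_nonpos (by positivity) hx (by linarith)
    _ = (min 1 s / 2) ^ (-β) * (1 + r) ^ (-β) := Real.mul_rpow (by positivity) (by positivity)

end CauchyKernel

lemma mul_one_add_rpow_sub_one_le {p x : ℝ} (hp0 : 0 ≤ p) (hp1 : p ≤ 1) (hx : 0 ≤ x) :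
    p * (1 + x) ^ (p - 1) ≤ (1 + x) ^ p - x ^ p := by
  have hx1 : 0 < 1 + x := by linarith
  -- Bernoulli's inequality `(1 - t)^p ≤ 1 - p t` at `t = 1 / (1 + x)`
  have h := rpow_one_add_le_one_add_mul_self (s := -(1 + x)⁻¹)
    (by rw [neg_le_neg_iff]; exact inv_le_one_of_one_le₀ (by linarith)) hp0 hp1
  have hx' : 1 + -(1 + x)⁻¹ = x / (1 + x) := by field_simp; ring
  rw [hx', Real.div_rpow hx hx1.le, div_le_iff₀ (by positivity)] at h
  rw [Real.rpow_sub_one hx1.ne']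
  linarith [show (1 + p * -(1 + x)⁻¹) * (1 + x) ^ p = (1 + x) ^ p - p * ((1 + x) ^ p / (1 + x))
    by field_simp; ring]

lemma sum_range_one_add_rpow_neg_le {γ : ℝ} (hγ0 : 0 ≤ γ) (hγ1 : γ < 1) (N : ℕ) :
    ∑ m ∈ range N, (1 + (m : ℝ)) ^ (-γ) ≤ (N : ℝ) ^ (1 - γ) / (1 - γ) := by
  induction N with
  | zero => simp [Real.zero_rpow (by linarith : 1 - γ ≠ 0)]
  | succ N ih =>
    have h := mul_one_add_rpow_sub_one_le (p := 1 - γ) (by linarith) (by linarith) N.cast_nonneg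
    rw [sub_sub_cancel_left] at h
    have h' : (1 + (N : ℝ)) ^ (-γ) ≤ ((1 + N) ^ (1 - γ) - N ^ (1 - γ)) / (1 - γ) := by
      rw [le_div_iff₀ (by linarith)]; linarith
    rw [sum_range_succ]
    calc _ ≤ (N : ℝ) ^ (1 - γ) / (1 - γ) + ((1 + N) ^ (1 - γ) - N ^ (1 - γ)) / (1 - γ) :=
          add_le_add ih h'
      _ = _ := by rw [Nat.cast_succ, add_comm (N : ℝ) 1]; ring

lemma summable_one_add_rpow_neg {γ : ℝ} (hγ : 1 < γ) :
    Summable fun m : ℕ => (1 + (m : ℝ)) ^ (-γ) :=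
  ((summable_nat_add_iff 1).2 (Real.summable_nat_rpow (p := -γ) |>.2 (by linarith))).congr
    fun m => by push_cast; rw [add_comm]

lemma sum_range_comp_dist_le {f : ℕ → ℝ} (hf : ∀ m, 0 ≤ f m) {a N : ℕ} (ha : a < N) :
    ∑ j ∈ range N, f (a.dist j) ≤ 2 * ∑ m ∈ range N, f m := by
  classical
  rw [sum_comp, mul_sum]
  have hfiber (m : ℕ) : #{j ∈ range N | a.dist j = m} ≤ 2 :=
    (Finset.card_le_card (t := {a + m, a - m}) fun j hj => by
      simp only [Finset.mem_filter, Finset.mem_insert, Finset.mem_singleton] at hj ⊢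
      unfold Nat.dist at hj; omega).trans card_le_two
  calc ∑ m ∈ (range N).image a.dist, #{j ∈ range N | a.dist j = m} • f m
      ≤ ∑ m ∈ (range N).image a.dist, 2 * f m := sum_le_sum fun m _ => by
        rw [nsmul_eq_mul]; gcongr
        · exact hf m
        · exact_mod_cast hfiber m
    _ ≤ ∑ m ∈ range N, 2 * f m :=
        sum_le_sum_of_subset_of_nonneg (image_subset_iff.2 fun j hj => by
          simp only [Finset.mem_range] at hj ⊢; unfold Nat.dist; omega)
          fun m _ _ => by linarith [hf m]

lemma abs_natCast_sub_natCast (a b : ℕ) : |(a : ℝ) - b| = a.dist b := by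
  rcases le_total a b with h | h
  · rw [Nat.dist_eq_sub_of_le h, Nat.cast_sub h, abs_sub_comm, abs_of_nonneg (by simpa using h)]
  · rw [Nat.dist_eq_sub_of_le_right h, Nat.cast_sub h, abs_of_nonneg (by simpa using h)]

lemma isLittleO_natCast_rpow_rpow {a b : ℝ} (hab : a < b) :
    (fun N : ℕ => (N : ℝ) ^ a) =o[atTop] fun N => (N : ℝ) ^ b := by
  refine IsLittleO.comp_tendsto (f := fun x : ℝ => x ^ a) (g := fun x : ℝ => x ^ b) ?_
    tendsto_natCast_atTop_atTop
  rw [isLittleO_iff_tendsto' ((eventually_gt_atTop 0).mono fun x hx h =>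
    absurd h (Real.rpow_pos_of_pos hx b).ne')]
  refine (tendsto_rpow_neg_atTop (by linarith : 0 < b - a)).congr'
    ((eventually_gt_atTop 0).mono fun x hx => ?_)
  simp only [← Real.rpow_sub hx, neg_sub]

lemma eq_zero_of_sq_mul_sq_le_mul {f g h : ℕ → ℝ} {ρ a b c : ℝ} (habc : a + b < 2 * c)
    (hfgh : ∀ N, ρ ^ 2 * g N ^ 2 ≤ f N * h N) (hf : f =O[atTop] fun N : ℕ => (N : ℝ) ^ a)
    (hh : h =O[atTop] fun N : ℕ => (N : ℝ) ^ b) (hg : (fun N : ℕ => (N : ℝ) ^ c) =O[atTop] g) :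
    ρ = 0 := by
  by_contra hρ
  have hgfh : (fun N => g N ^ 2) =O[atTop] fun N => f N * h N :=
    IsBigO.of_bound (ρ ^ 2)⁻¹ <| Eventually.of_forall fun N => by
      rw [le_inv_mul_iff₀ (by positivity), Real.norm_of_nonneg (sq_nonneg _)]
      exact (hfgh N).trans (Real.le_norm_self _)
  have hpos : ∀ᶠ N : ℕ in atTop, (0 : ℝ) < N :=
    (eventually_gt_atTop 0).mono fun N hN => Nat.cast_pos.2 hN
  have hO : (fun N : ℕ => (N : ℝ) ^ (2 * c)) =O[atTop] fun N => (N : ℝ) ^ (a + b) :=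
    ((hg.pow 2).trans (hgfh.trans (hf.mul hh))).congr'
      (hpos.mono fun N hN => by
        simp only [mul_comm (2 : ℝ), ← Real.rpow_mul_natCast hN.le]; norm_num)
      (hpos.mono fun N hN => (Real.rpow_add hN a b).symm)
  exact (isLittleO_natCast_rpow_rpow habc).not_isBigO
    (hpos.mono fun N hN => (Real.rpow_pos_of_pos hN _).ne').frequently hO

lemma sq_apply_zero_one_le_of_dotProduct_mulVec_nonneg {M : Matrix (Fin 2) (Fin 2) ℝ}
    (hM : M 1 0 = M 0 1) (h : ∀ a, 0 ≤ a ⬝ᵥ M *ᵥ a) : M 0 1 ^ 2 ≤ M 0 0 * M 1 1 := by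
  have hdisc := discrim_le_zero (a := M 0 0) (b := 2 * M 0 1) (c := M 1 1) fun t => by
    have := h ![t, 1]
    simp only [dotProduct, mulVec, Fin.sum_univ_two, hM, cons_val_zero, cons_val_one,
      cons_val_fin_one, mul_one, one_mul] at this
    linarith
  rw [discrim] at hdisc
  linarith

lemma PosDefIn.dotProduct_sum_mulVec_nonneg {n : ℕ} {C : ℝ → Matrix (Fin 2) (Fin 2) ℝ}
    (hC : PosDefIn n C) {ι : Type*} [Fintype ι] (x : ι → EuclideanSpace ℝ (Fin n))
    (a : Fin 2 → ℝ) : 0 ≤ a ⬝ᵥ (∑ i, ∑ j, C ‖x i - x j‖) *ᵥ a := by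
  set e := (Fintype.equivFin ι).symm
  have h := hC _ (x ∘ e) fun _ => a
  simp only [sum_mulVec, dotProduct_sum]
  convert h using 1
  exact Fintype.sum_equiv e.symm _ _ fun i => Fintype.sum_equiv e.symm _ _ fun j => by simp

def gridPt {n N : ℕ} (v : Fin n → Fin N) : EuclideanSpace ℝ (Fin n) :=
  WithLp.toLp 2 fun k => (v k : ℝ)

def gridSum (n N : ℕ) (f : ℝ → ℝ) : ℝ :=
  ∑ v : Fin n → Fin N, ∑ w : Fin n → Fin N, f ‖gridPt v - gridPt w‖

lemma gridSum_const_mul (n N : ℕ) (c : ℝ) (f : ℝ → ℝ) :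
    gridSum n N (fun r => c * f r) = c * gridSum n N f := by
  simp only [gridSum, mul_sum]

lemma PosDefIn.sq_gridSum_le {n : ℕ} {C : ℝ → Matrix (Fin 2) (Fin 2) ℝ} (hC : PosDefIn n C)
    (hsymm : ∀ r, C r 1 0 = C r 0 1) (N : ℕ) :
    gridSum n N (C · 0 1) ^ 2 ≤ gridSum n N (C · 0 0) * gridSum n N (C · 1 1) := by
  have := sq_apply_zero_one_le_of_dotProduct_mulVec_nonneg (by simp [Matrix.sum_apply, hsymm])
    (hC.dotProduct_sum_mulVec_nonneg (gridPt (N := N)))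
  simpa only [Matrix.sum_apply, gridSum] using this

lemma gridSum_nonneg {n N : ℕ} {f : ℝ → ℝ} (hf : ∀ r, 0 ≤ r → 0 ≤ f r) : 0 ≤ gridSum n N f :=
  sum_nonneg fun _ _ => sum_nonneg fun _ _ => hf _ (norm_nonneg _)

lemma norm_gridPt_sub_le {n N : ℕ} (v w : Fin n → Fin N) : ‖gridPt v - gridPt w‖ ≤ √n * N := by
  rw [EuclideanSpace.norm_eq, ← Real.sqrt_sq (Nat.cast_nonneg N : (0:ℝ) ≤ N),
    ← Real.sqrt_mul n.cast_nonneg]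
  gcongr
  calc ∑ k, ‖(gridPt v - gridPt w) k‖ ^ 2 ≤ ∑ _k : Fin n, (N : ℝ) ^ 2 := by
        refine sum_le_sum fun k _ => pow_le_pow_left₀ (norm_nonneg _) ?_ 2
        have hv : ((v k : ℕ) : ℝ) < N := by exact_mod_cast (v k).isLt
        have hw : ((w k : ℕ) : ℝ) < N := by exact_mod_cast (w k).isLt
        rw [Real.norm_eq_abs, abs_le]
        constructor <;> simp [gridPt] <;> linarith
    _ = n * N ^ 2 := by simp

lemma one_add_norm_sub_rpow_neg_le_prod {n : ℕ} (hn : 0 < n) {β : ℝ} (hβ : 0 ≤ β)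
    (x y : EuclideanSpace ℝ (Fin n)) :
    (1 + ‖x - y‖) ^ (-β) ≤ ∏ k, (1 + |x k - y k|) ^ (-(β / n)) := by
  rw [Real.finsetProd_rpow _ _ fun k _ => by positivity]
  have hprod : ∏ k, (1 + |x k - y k|) ≤ (1 + ‖x - y‖) ^ n :=
    calc ∏ k, (1 + |x k - y k|) ≤ ∏ _k : Fin n, (1 + ‖x - y‖) :=
          prod_le_prod (fun _ _ => by positivity) fun k _ => by
            gcongr; exact PiLp.norm_apply_le (x - y) k
      _ = (1 + ‖x - y‖) ^ n := by simp
  calc (1 + ‖x - y‖) ^ (-β) = ((1 + ‖x - y‖) ^ n) ^ (-(β / n)) := by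
        rw [← Real.rpow_natCast_mul (by positivity)]
        field_simp
    _ ≤ _ := Real.rpow_le_rpow_of_nonpos (prod_pos fun _ _ => by positivity) hprod
        (neg_nonpos.2 (by positivity))

lemma sum_one_add_abs_sub_rpow_neg_le {N : ℕ} (a : Fin N) (γ : ℝ) :
    ∑ j : Fin N, (1 + |(a : ℝ) - j|) ^ (-γ) ≤ 2 * ∑ m ∈ range N, (1 + (m : ℝ)) ^ (-γ) := by
  rw [Fin.sum_univ_eq_sum_range (fun j => (1 + |(a : ℝ) - j|) ^ (-γ))]
  simp only [abs_natCast_sub_natCast]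
  exact sum_range_comp_dist_le (f := fun m => (1 + (m : ℝ)) ^ (-γ)) (fun m => by positivity) a.isLt

lemma sum_prod_one_add_abs_sub_rpow_neg_le {n N : ℕ} (v : Fin n → Fin N) (γ : ℝ) :
    ∑ w : Fin n → Fin N, ∏ k, (1 + |(v k : ℝ) - w k|) ^ (-γ) ≤
      (2 * ∑ m ∈ range N, (1 + (m : ℝ)) ^ (-γ)) ^ n := by
  classical
  rw [← Fintype.prod_sum fun k (j : Fin N) => (1 + |(v k : ℝ) - j|) ^ (-γ)]
  calc ∏ k, ∑ j : Fin N, (1 + |(v k : ℝ) - j|) ^ (-γ)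
      ≤ ∏ _k : Fin n, 2 * ∑ m ∈ range N, (1 + (m : ℝ)) ^ (-γ) :=
        prod_le_prod (fun k _ => by positivity) fun k _ => sum_one_add_abs_sub_rpow_neg_le (v k) γ
    _ = _ := by simp

lemma gridSum_cauchyKernel_le {n : ℕ} (hn : 0 < n) {s α β : ℝ} (hs : 0 < s) (hα : 0 < α)
    (hβ : 0 ≤ β) (N : ℕ) :
    gridSum n N (cauchyKernel s α β) ≤
      (min 1 s / 2) ^ (-β) * N ^ n * (2 * ∑ m ∈ range N, (1 + (m : ℝ)) ^ (-(β / n))) ^ n := by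
  calc gridSum n N (cauchyKernel s α β)
      ≤ ∑ v : Fin n → Fin N, ∑ w : Fin n → Fin N,
          (min 1 s / 2) ^ (-β) * ∏ k, (1 + |(v k : ℝ) - w k|) ^ (-(β / n)) :=
        sum_le_sum fun v _ => sum_le_sum fun w _ =>
          (cauchyKernel_le hs hα hβ (norm_nonneg _)).trans <| by
            gcongr; exact one_add_norm_sub_rpow_neg_le_prod hn hβ (gridPt v) (gridPt w)
    _ ≤ ∑ _v : Fin n → Fin N,
          (min 1 s / 2) ^ (-β) * (2 * ∑ m ∈ range N, (1 + (m : ℝ)) ^ (-(β / n))) ^ n :=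
        sum_le_sum fun v _ => by
          rw [← mul_sum]; gcongr; exact sum_prod_one_add_abs_sub_rpow_neg_le v _
    _ = _ := by
        simp only [sum_const, card_univ, Fintype.card_fun, Fintype.card_fin, nsmul_eq_mul]
        push_cast; ring

lemma isBigO_gridSum_cauchyKernel_of_lt {n : ℕ} {s α β : ℝ} (hs : 0 < s) (hα : 0 < α)
    (hβ : 0 < β) (hβn : β < n) :
    (fun N => gridSum n N (cauchyKernel s α β)) =O[atTop] fun N : ℕ => (N : ℝ) ^ (2 * n - β) := by
  have hn : 0 < n := by exact_mod_cast hβ.trans hβn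
  have hγ : β / n < 1 := (div_lt_one (by positivity)).2 hβn
  refine IsBigO.of_bound ((min 1 s / 2) ^ (-β) * (2 / (1 - β / n)) ^ n)
    (Eventually.of_forall fun N => ?_)
  rw [Real.norm_of_nonneg (gridSum_nonneg fun r hr => cauchyKernel_nonneg hs.le hr),
    Real.norm_of_nonneg (by positivity)]
  calc gridSum n N (cauchyKernel s α β)
      ≤ (min 1 s / 2) ^ (-β) * N ^ n * (2 * ∑ m ∈ range N, (1 + (m : ℝ)) ^ (-(β / n))) ^ n :=
        gridSum_cauchyKernel_le hn hs hα hβ.le N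
    _ ≤ (min 1 s / 2) ^ (-β) * N ^ n * (2 * ((N : ℝ) ^ (1 - β / n) / (1 - β / n))) ^ n := by
        gcongr; exact sum_range_one_add_rpow_neg_le (by positivity) hγ N
    _ = (min 1 s / 2) ^ (-β) * (2 / (1 - β / n)) ^ n * (N : ℝ) ^ (2 * n - β) := by
        have hexp : (2 * n - β : ℝ) = n + (1 - β / n) * n := by field_simp; ring
        rw [hexp, Real.rpow_add' N.cast_nonneg (by rw [← hexp]; linarith), Real.rpow_natCast,
          Real.rpow_mul_natCast N.cast_nonneg]
        ring

lemma isBigO_gridSum_cauchyKernel_of_gt {n : ℕ} (hn : 0 < n) {s α β : ℝ} (hs : 0 < s)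
    (hα : 0 < α) (hβn : n < β) :
    (fun N => gridSum n N (cauchyKernel s α β)) =O[atTop] fun N : ℕ => (N : ℝ) ^ (n : ℝ) := by
  have hβ : 0 ≤ β := by linarith [(Nat.cast_pos.2 hn : (0 : ℝ) < n)]
  have hγ : 1 < β / n := (one_lt_div (by positivity)).2 hβn
  set T := ∑' m : ℕ, (1 + (m : ℝ)) ^ (-(β / n))
  refine IsBigO.of_bound ((min 1 s / 2) ^ (-β) * (2 * T) ^ n) (Eventually.of_forall fun N => ?_)
  rw [Real.norm_of_nonneg (gridSum_nonneg fun r hr => cauchyKernel_nonneg hs.le hr),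
    Real.norm_of_nonneg (by positivity), Real.rpow_natCast]
  calc gridSum n N (cauchyKernel s α β)
      ≤ (min 1 s / 2) ^ (-β) * N ^ n * (2 * ∑ m ∈ range N, (1 + (m : ℝ)) ^ (-(β / n))) ^ n :=
        gridSum_cauchyKernel_le hn hs hα hβ N
    _ ≤ (min 1 s / 2) ^ (-β) * N ^ n * (2 * T) ^ n := by
        gcongr
        exact (summable_one_add_rpow_neg hγ).sum_le_tsum _ fun m _ => by positivity
    _ = _ := by ring

lemma le_gridSum_cauchyKernel {n N : ℕ} (hn : 0 < n) (hN : 0 < N) {s α β : ℝ} (hs : 0 < s)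
    (hα : 0 < α) (hβ : 0 ≤ β) :
    (1 + s ^ α) ^ (-(β / α)) * (√n * N) ^ (-β) * N ^ (2 * n) ≤
      gridSum n N (cauchyKernel s α β) := by
  have hR : 1 ≤ √n * N := one_le_mul_of_one_le_of_one_le
    (Real.one_le_sqrt.2 (by exact_mod_cast hn)) (by exact_mod_cast hN)
  calc (1 + s ^ α) ^ (-(β / α)) * (√n * N) ^ (-β) * N ^ (2 * n)
      = ∑ _v : Fin n → Fin N, ∑ _w : Fin n → Fin N, (1 + s ^ α) ^ (-(β / α)) * (√n * N) ^ (-β) := by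
        simp only [pow_mul, sum_const, card_univ, Fintype.card_pi, Fintype.card_fin, prod_const,
          nsmul_eq_mul, Nat.cast_pow]
        ring
    _ ≤ gridSum n N (cauchyKernel s α β) :=
        sum_le_sum fun v _ => sum_le_sum fun w _ =>
          (rpow_neg_mul_le_cauchyKernel hs hα hβ hR).trans <|
            cauchyKernel_antitoneOn hs.le hα hβ (norm_nonneg _) (by positivity : (0:ℝ) ≤ √n * N)
              (norm_gridPt_sub_le v w)

lemma isBigO_rpow_gridSum_cauchyKernel {n : ℕ} (hn : 0 < n) {s α β : ℝ} (hs : 0 < s)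
    (hα : 0 < α) (hβ : 0 ≤ β) :
    (fun N : ℕ => (N : ℝ) ^ (2 * n - β)) =O[atTop] fun N => gridSum n N (cauchyKernel s α β) := by
  set c := (1 + s ^ α) ^ (-(β / α)) * √n ^ (-β) with hc_def
  have hc : 0 < c := by positivity
  refine IsBigO.of_bound c⁻¹ ((eventually_gt_atTop 0).mono fun N hN => ?_)
  have hN : (0 : ℝ) < N := Nat.cast_pos.2 hN
  rw [Real.norm_of_nonneg (by positivity),
    Real.norm_of_nonneg (gridSum_nonneg fun r hr => cauchyKernel_nonneg hs.le hr),
    le_inv_mul_iff₀ hc]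
  calc c * (N : ℝ) ^ (2 * n - β) = (1 + s ^ α) ^ (-(β / α)) * (√n * N) ^ (-β) * N ^ (2 * n) := by
        rw [hc_def, Real.mul_rpow (by positivity) hN.le, Real.rpow_sub hN, Real.rpow_neg hN.le,
          ← Real.rpow_natCast]
        push_cast; field_simp
    _ ≤ _ := le_gridSum_cauchyKernel hn (Nat.cast_pos.1 hN) hs hα hβ

theorem bivariate_generalized_cauchy_necessary_mixed_general
    (n : ℕ)
    (σ1 σ2 s11 s12 s22 α11 α12 α22 β11 β12 β22 ρ : ℝ)
    (hσ1 : 0 < σ1) (hσ2 : 0 < σ2)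
    (hs11 : 0 < s11) (hs12 : 0 < s12) (hs22 : 0 < s22)
    (hα11 : α11 ∈ Ioc (0 : ℝ) 1) (hα22 : α22 ∈ Ioc (0 : ℝ) 1)
    (hα12 : α12 ∈ Ioc (0 : ℝ) 2)
    (hβ11 : 0 < β11) (hβ12 : 0 < β12) (hβ22 : 0 < β22)
    (hmix : (2 * β12 < β11 + (n : ℝ) ∧ β11 < (n : ℝ) ∧ (n : ℝ) < β22) ∨
            (2 * β12 < β22 + (n : ℝ) ∧ β22 < (n : ℝ) ∧ (n : ℝ) < β11))
    (hpd : PosDefIn n (fun r =>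
      !![σ1 ^ 2 * (1 + (s11 * r) ^ α11) ^ (-(β11 / α11)),
         ρ * σ1 * σ2 * (1 + (s12 * r) ^ α12) ^ (-(β12 / α12));
         ρ * σ1 * σ2 * (1 + (s12 * r) ^ α12) ^ (-(β12 / α12)),
         σ2 ^ 2 * (1 + (s22 * r) ^ α22) ^ (-(β22 / α22))])) :
    ρ = 0 := by
  have hCS (N : ℕ) : ρ ^ 2 * gridSum n N (cauchyKernel s12 α12 β12) ^ 2 ≤
      gridSum n N (cauchyKernel s11 α11 β11) * gridSum n N (cauchyKernel s22 α22 β22) := by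
    have h := hpd.sq_gridSum_le (fun _ => rfl) N
    simp only [of_apply, cons_val', cons_val_zero, cons_val_one, cons_val_fin_one,
      gridSum_const_mul] at h
    unfold cauchyKernel
    exact le_of_mul_le_mul_left (by linear_combination h) (by positivity : 0 < (σ1 * σ2) ^ 2)
  rcases hmix with ⟨h12, h11, h22⟩ | ⟨h12, h22, h11⟩
  · have hn : 0 < n := by exact_mod_cast hβ11.trans h11
    exact eq_zero_of_sq_mul_sq_le_mul (by linarith) hCS
      (isBigO_gridSum_cauchyKernel_of_lt hs11 hα11.1 hβ11 h11)
      (isBigO_gridSum_cauchyKernel_of_gt hn hs22 hα22.1 h22)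
      (isBigO_rpow_gridSum_cauchyKernel hn hs12 hα12.1 hβ12.le)
  · have hn : 0 < n := by exact_mod_cast hβ22.trans h22
    exact eq_zero_of_sq_mul_sq_le_mul (by linarith) (fun N => (hCS N).trans_eq (mul_comm _ _))
      (isBigO_gridSum_cauchyKernel_of_lt hs22 hα22.1 hβ22 h22)
      (isBigO_gridSum_cauchyKernel_of_gt hn hs11 hα11.1 h11)
      (isBigO_rpow_gridSum_cauchyKernel hn hs12 hα12.1 hβ12.le)

/-- If for some indices `i ≠ j` one has `2β12 < βᵢᵢ + n`, `βᵢᵢ < n` and `βⱼⱼ > n`, then the bivariate generalized Cauchy model is a valid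
covariance model in `ℝⁿ` only for `ρ = 0`. -/
theorem bivariate_generalized_cauchy_necessary_mixed
    (n : ℕ) (hn : 1 ≤ n)
    (σ1 σ2 s11 s12 s22 α11 α12 α22 β11 β12 β22 ρ : ℝ)
    (hσ1 : 0 < σ1) (hσ2 : 0 < σ2)
    (hs11 : 0 < s11) (hs12 : 0 < s12) (hs22 : 0 < s22)
    (hα11 : α11 ∈ Ioc (0 : ℝ) 1) (hα22 : α22 ∈ Ioc (0 : ℝ) 1)
    (hα12 : α12 ∈ Ioc (0 : ℝ) 2)
    (hβ11 : 0 < β11) (hβ12 : 0 < β12) (hβ22 : 0 < β22)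
    (hρ : ρ ∈ Icc (-1 : ℝ) 1)
    (hmix : (2 * β12 < β11 + (n : ℝ) ∧ β11 < (n : ℝ) ∧ (n : ℝ) < β22) ∨
            (2 * β12 < β22 + (n : ℝ) ∧ β22 < (n : ℝ) ∧ (n : ℝ) < β11))
    (hpd : PosDefIn n (fun r =>
      !![σ1 ^ 2 * (1 + (s11 * r) ^ α11) ^ (-(β11 / α11)),
         ρ * σ1 * σ2 * (1 + (s12 * r) ^ α12) ^ (-(β12 / α12));
         ρ * σ1 * σ2 * (1 + (s12 * r) ^ α12) ^ (-(β12 / α12)),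
         σ2 ^ 2 * (1 + (s22 * r) ^ α22) ^ (-(β22 / α22))])) :
    ρ = 0 :=
  bivariate_generalized_cauchy_necessary_mixed_general n σ1 σ2 s11 s12 s22 α11 α12 α22 β11 β12 β22 ρ
    hσ1 hσ2 hs11 hs12 hs22 hα11 hα22 hα12 hβ11 hβ12 hβ22 hmix hpd
end
end
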